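/- arXiv:1811.08246 — 3 statements merged into one kernel-verified Lean document; each statement's English description precedes it below -/
import Mathlib

section
/- The polynomial 100t⁵ + 495t⁴ + 2056t³ − 2928t² + 1408t − 256 has exactly one real root β₁, and β₁ lies in the interval (0.474, 0.475). -/
/-!
The quintic is strictly increasing: its derivative is `500 (x² + 99/50 x - 1)²` plus a positive
definite quadratic. Since it is negative at `0.474` and positive at `0.475`, the intermediate
value theorem gives a root there, and monotonicity makes it the only real root.
-/

noncomputable def quintic (t : ℝ) : ℝ :=
  100 * t ^ 5 + 495 * t ^ 4 + 2056 * t ^ 3 - 2928 * t ^ 2 + 1408 * t - 256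

theorem StrictMono.existsUnique_eq_of_mem_Ioo {α δ : Type*} [TopologicalSpace α]
    [ConditionallyCompleteLinearOrder α] [OrderTopology α] [DenselyOrdered α]
    [LinearOrder δ] [TopologicalSpace δ] [OrderClosedTopology δ] {f : α → δ}
    (hf : StrictMono f) (hc : Continuous f) {a b : α} {c : δ} (ha : f a < c) (hb : c < f b) :
    ∃ x ∈ Set.Ioo a b, f x = c ∧ ∀ y, f y = c → y = x := by
  have hab : a ≤ b := (hf.lt_iff_lt.mp (ha.trans hb)).le
  obtain ⟨x, hx, hfx⟩ := intermediate_value_Ioo hab hc.continuousOn ⟨ha, hb⟩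
  exact ⟨x, hx, hfx, fun y hy => hf.injective (hy.trans hfx.symm)⟩

theorem hasDerivAt_quintic (x : ℝ) :
    HasDerivAt quintic (500 * x ^ 4 + 1980 * x ^ 3 + 6168 * x ^ 2 - 5856 * x + 1408) x :=
  (((((((hasDerivAt_pow 5 x).const_mul 100).add ((hasDerivAt_pow 4 x).const_mul 495)).add
    ((hasDerivAt_pow 3 x).const_mul 2056)).sub ((hasDerivAt_pow 2 x).const_mul 2928)).add
    ((hasDerivAt_id x).const_mul 1408)).sub_const 256).congr_deriv (by push_cast; ring)

theorem strictMono_quintic : StrictMono quintic :=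
  strictMono_of_deriv_pos fun x => by
    rw [(hasDerivAt_quintic x).deriv]
    nlinarith [sq_nonneg (x ^ 2 + 99 / 50 * x - 1), sq_nonneg (x - 9690 / 26039), sq_nonneg x]

/-- The quintic `100t⁵ + 495t⁴ + 2056t³ - 2928t² + 1408t - 256` has exactly one
real root `β₁`, and `β₁ ∈ (0.474, 0.475)`. -/
theorem stmt_7 :
    ∃ β₁ : ℝ, (0.474 : ℝ) < β₁ ∧ β₁ < (0.475 : ℝ) ∧
      100 * β₁ ^ 5 + 495 * β₁ ^ 4 + 2056 * β₁ ^ 3 - 2928 * β₁ ^ 2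
        + 1408 * β₁ - 256 = 0 ∧
      ∀ t : ℝ, 100 * t ^ 5 + 495 * t ^ 4 + 2056 * t ^ 3 - 2928 * t ^ 2
        + 1408 * t - 256 = 0 → t = β₁ := by
  have hcont : Continuous quintic := by unfold quintic; fun_prop
  obtain ⟨β₁, ⟨hlo, hhi⟩, hroot, huniq⟩ :=
    strictMono_quintic.existsUnique_eq_of_mem_Ioo hcont
      (a := 0.474) (b := 0.475) (c := 0) (by norm_num [quintic]) (by norm_num [quintic])
  exact ⟨β₁, hlo, hhi, hroot, huniq⟩
end

section
/- The quartic polynomial 13t⁴ + 4t³ − 20t² − 24t − 8 has exactly one positive real root β₃, and β₃² lies in the interval (2.476, 2.477). -/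
lemma quartic_root_gt_one (t : ℝ) (ht : 0 < t)
    (h : 13 * t ^ 4 + 4 * t ^ 3 - 20 * t ^ 2 - 24 * t - 8 = 0) : 1 < t := by
  by_contra h1
  push_neg at h1
  nlinarith [sq_nonneg t, sq_nonneg (t - 1), mul_pos ht ht, sq_nonneg (t^2 - t)]

/-- The quartic `13t⁴ + 4t³ - 20t² - 24t - 8` has exactly one positive real root
`β₃`, and `β₃² ∈ (2.476, 2.477)`. -/
theorem stmt_10 :
    ∃ β₃ : ℝ, 0 < β₃ ∧
      13 * β₃ ^ 4 + 4 * β₃ ^ 3 - 20 * β₃ ^ 2 - 24 * β₃ - 8 = 0 ∧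
      (∀ t : ℝ, 0 < t →
        13 * t ^ 4 + 4 * t ^ 3 - 20 * t ^ 2 - 24 * t - 8 = 0 → t = β₃) ∧
      (2.476 : ℝ) < β₃ ^ 2 ∧ β₃ ^ 2 < (2.477 : ℝ) := by
  set f : ℝ → ℝ := fun t => 13 * t ^ 4 + 4 * t ^ 3 - 20 * t ^ 2 - 24 * t - 8 with hf
  have hab : (314707/200000 : ℝ) ≤ 1967/1250 := by norm_num
  have hcont : ContinuousOn f (Set.Icc (314707/200000 : ℝ) (1967/1250)) := by
    apply Continuous.continuousOn; fun_prop
  have hsub := intermediate_value_Icc hab hcont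
  have h0 : (0 : ℝ) ∈ Set.Icc (f (314707/200000)) (f (1967/1250)) := by
    constructor <;> · simp only [hf]; norm_num
  obtain ⟨β, hβmem, hβ0⟩ := hsub h0
  simp only [hf] at hβ0
  obtain ⟨hβl, hβr⟩ := hβmem
  have hβpos : 0 < β := by linarith
  refine ⟨β, hβpos, hβ0, ?_, ?_, ?_⟩
  · intro t ht hft
    have ht1 : 1 < t := quartic_root_gt_one t ht hft
    have hβ1 : 1 < β := quartic_root_gt_one β hβpos hβ0
    have hq : 0 < 13*(β^3+β^2*t+β*t^2+t^3)+4*(β^2+β*t+t^2)-20*(β+t)-24 := by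
      nlinarith [mul_pos (sub_pos.2 ht1) (sub_pos.2 hβ1), sq_nonneg (t-1), sq_nonneg (β-1),
        mul_pos (mul_pos (sub_pos.2 ht1) (sub_pos.2 hβ1)) hβpos,
        mul_pos (mul_pos (sub_pos.2 ht1) (sub_pos.2 hβ1)) ht,
        mul_nonneg (sq_nonneg (t-1)) hβpos.le, mul_nonneg (sq_nonneg (β-1)) ht.le,
        mul_pos (mul_pos (sub_pos.2 ht1) (sub_pos.2 ht1)) (sub_pos.2 hβ1),
        mul_pos (mul_pos (sub_pos.2 hβ1) (sub_pos.2 hβ1)) (sub_pos.2 ht1)]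
    rcases lt_trichotomy t β with h | h | h
    · exfalso
      nlinarith [mul_pos (sub_pos.2 h) hq]
    · exact h
    · exfalso
      nlinarith [mul_pos (sub_pos.2 h) hq]
  · nlinarith
  · nlinarith
end

section
/- Let q > 0. All three roots of a monic real cubic h(X) = X³ + bX² + cX + e are real and contained in [−2√q, 2√q] if and only if: the discriminant of h is ≥ 0, both critical points of h (roots of h') are real and lie in [−2√q, 2√q], and h(−2√q) ≤ 0 ≤ h(2√q). -/
/-- All three roots of the monic cubic `h(X) = X³ + bX² + cX + e` are real and
lie in `[-2√q, 2√q]` iff: the discriminant of `h` is nonnegative, both critical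
points of `h` are real and lie in `[-2√q, 2√q]`, and `h(-2√q) ≤ 0 ≤ h(2√q)`. -/
theorem stmt_13 (q : ℝ) (hq : 0 < q) (b c e : ℝ) (h : ℝ → ℝ)
    (hh : ∀ X, h X = X ^ 3 + b * X ^ 2 + c * X + e) :
    (∃ r₁ r₂ r₃ : ℝ,
        (∀ X : ℝ, h X = (X - r₁) * (X - r₂) * (X - r₃)) ∧
        r₁ ∈ Set.Icc (-(2 * Real.sqrt q)) (2 * Real.sqrt q) ∧
        r₂ ∈ Set.Icc (-(2 * Real.sqrt q)) (2 * Real.sqrt q) ∧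
        r₃ ∈ Set.Icc (-(2 * Real.sqrt q)) (2 * Real.sqrt q)) ↔
    (0 ≤ 18 * b * c * e - 4 * b ^ 3 * e + b ^ 2 * c ^ 2 - 4 * c ^ 3
        - 27 * e ^ 2 ∧
     0 ≤ b ^ 2 - 3 * c ∧
     (∀ x : ℝ, 3 * x ^ 2 + 2 * b * x + c = 0 →
        x ∈ Set.Icc (-(2 * Real.sqrt q)) (2 * Real.sqrt q)) ∧
     h (-(2 * Real.sqrt q)) ≤ 0 ∧ 0 ≤ h (2 * Real.sqrt q)) := by
  have hs0 : 0 < 2 * Real.sqrt q := by positivity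
  set s := 2 * Real.sqrt q with hsdef
  constructor
  · rintro ⟨r₁, r₂, r₃, hfach, hr1, hr2, hr3⟩
    have hfac : ∀ X : ℝ, X ^ 3 + b * X ^ 2 + c * X + e
        = (X - r₁) * (X - r₂) * (X - r₃) := by
      intro X; rw [← hh X]; exact hfach X
    have he : e = -(r₁ * r₂ * r₃) := by linear_combination hfac 0
    have hb : b = -(r₁ + r₂ + r₃) := by
      linear_combination (hfac 1 + hfac (-1)) / 2 - hfac 0
    have hc : c = r₁ * r₂ + r₁ * r₃ + r₂ * r₃ := by
      linear_combination (hfac 1 - hfac (-1)) / 2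
    subst hb hc he
    refine ⟨?_, ?_, ?_, ?_, ?_⟩
    · have key : 18 * -(r₁ + r₂ + r₃) * (r₁ * r₂ + r₁ * r₃ + r₂ * r₃) * -(r₁ * r₂ * r₃)
          - 4 * (-(r₁ + r₂ + r₃)) ^ 3 * -(r₁ * r₂ * r₃)
          + (-(r₁ + r₂ + r₃)) ^ 2 * (r₁ * r₂ + r₁ * r₃ + r₂ * r₃) ^ 2
          - 4 * (r₁ * r₂ + r₁ * r₃ + r₂ * r₃) ^ 3 - 27 * (-(r₁ * r₂ * r₃)) ^ 2
          = ((r₁ - r₂) * (r₁ - r₃) * (r₂ - r₃)) ^ 2 := by ring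
      rw [key]; positivity
    · nlinarith [sq_nonneg (r₁ - r₂), sq_nonneg (r₁ - r₃), sq_nonneg (r₂ - r₃)]
    · intro x hx
      constructor
      · by_contra hcon
        push_neg at hcon
        have p12 : 0 < (x - r₁) * (x - r₂) :=
          mul_pos_of_neg_of_neg (by linarith [hr1.1]) (by linarith [hr2.1])
        have p13 : 0 < (x - r₁) * (x - r₃) :=
          mul_pos_of_neg_of_neg (by linarith [hr1.1]) (by linarith [hr3.1])
        have p23 : 0 < (x - r₂) * (x - r₃) :=
          mul_pos_of_neg_of_neg (by linarith [hr2.1]) (by linarith [hr3.1])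
        nlinarith [p12, p13, p23]
      · by_contra hcon
        push_neg at hcon
        have p12 : 0 < (x - r₁) * (x - r₂) :=
          mul_pos (by linarith [hr1.2]) (by linarith [hr2.2])
        have p13 : 0 < (x - r₁) * (x - r₃) :=
          mul_pos (by linarith [hr1.2]) (by linarith [hr3.2])
        have p23 : 0 < (x - r₂) * (x - r₃) :=
          mul_pos (by linarith [hr2.2]) (by linarith [hr3.2])
        nlinarith [p12, p13, p23]
    · rw [hfach]
      have a1 : -s - r₁ ≤ 0 := by linarith [hr1.1]
      have a2 : -s - r₂ ≤ 0 := by linarith [hr2.1]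
      have a3 : -s - r₃ ≤ 0 := by linarith [hr3.1]
      have p : 0 ≤ (-s - r₁) * (-s - r₂) := by nlinarith [a1, a2]
      nlinarith [p, a3]
    · rw [hfach]
      have a1 : 0 ≤ s - r₁ := by linarith [hr1.2]
      have a2 : 0 ≤ s - r₂ := by linarith [hr2.2]
      have a3 : 0 ≤ s - r₃ := by linarith [hr3.2]
      exact mul_nonneg (mul_nonneg a1 a2) a3
  · rintro ⟨Hd, H2, H3, Hm, Hp⟩
    have hcont : Continuous h := by
      have hfun : h = fun X => X ^ 3 + b * X ^ 2 + c * X + e := funext hh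
      rw [hfun]; continuity
    rcases H2.eq_or_lt with Heq | Hlt
    · -- b² = 3c : triple root -b/3
      have h3c : 3 * c - b ^ 2 = 0 := by linarith
      have key : (27 * e - b ^ 3) ^ 2
          = -(27 * (18 * b * c * e - 4 * b ^ 3 * e + b ^ 2 * c ^ 2 - 4 * c ^ 3
              - 27 * e ^ 2))
            + (3 * c - b ^ 2) * (-36 * c ^ 2 - 3 * b ^ 2 * c + 162 * b * e - b ^ 4) := by
        ring
      have hle : (27 * e - b ^ 3) ^ 2 ≤ 0 := by rw [key, h3c]; nlinarith [Hd]
      have h0 : (27 * e - b ^ 3) ^ 2 = 0 := le_antisymm hle (sq_nonneg _)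
      have he27 : 27 * e - b ^ 3 = 0 := by
        exact sq_eq_zero_iff.mp h0
      have hmem : -b / 3 ∈ Set.Icc (-s) s := by
        apply H3
        linear_combination (1 / 3) * Heq
      refine ⟨-b / 3, -b / 3, -b / 3, ?_, hmem, hmem, hmem⟩
      intro X
      rw [hh]
      linear_combination (X / 3) * Heq + (1 / 27) * he27
    · -- b² > 3c
      set δ := Real.sqrt (b ^ 2 - 3 * c) with hδdef
      have hδ2 : δ ^ 2 = b ^ 2 - 3 * c := Real.sq_sqrt H2
      have hδpos : 0 < δ := Real.sqrt_pos.mpr Hlt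
      set x₁ := (-b - δ) / 3 with hx₁def
      set x₂ := (-b + δ) / 3 with hx₂def
      have hcrit1 : 3 * x₁ ^ 2 + 2 * b * x₁ + c = 0 := by
        linear_combination (3 * x₁ + b - δ) * hx₁def + (1 / 3) * hδ2
      have hcrit2 : 3 * x₂ ^ 2 + 2 * b * x₂ + c = 0 := by
        linear_combination (3 * x₂ + b + δ) * hx₂def + (1 / 3) * hδ2
      have hx₁mem := H3 x₁ hcrit1
      have hx₂mem := H3 x₂ hcrit2
      have hx12 : x₁ < x₂ := by rw [hx₁def, hx₂def]; linarith
      have h1 : 27 * h x₁ = 2 * b ^ 3 - 9 * b * c + 27 * e + 2 * δ ^ 3 := by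
        rw [hh]
        linear_combination (27 * x₁ ^ 2 + (18 * b - 9 * δ) * x₁ + 27 * c - 6 * b ^ 2
          - 3 * b * δ + 3 * δ ^ 2) * hx₁def + (-3 * δ) * hδ2
      have h2 : 27 * h x₂ = 2 * b ^ 3 - 9 * b * c + 27 * e - 2 * δ ^ 3 := by
        rw [hh]
        linear_combination (27 * x₂ ^ 2 + (18 * b + 9 * δ) * x₂ + 27 * c - 6 * b ^ 2
          + 3 * b * δ + 3 * δ ^ 2) * hx₂def + (3 * δ) * hδ2
      have hd3 : δ ^ 6 = (b ^ 2 - 3 * c) ^ 3 := by rw [← hδ2]; ring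
      have hprod : 729 * (h x₁ * h x₂)
          = -(27 * (18 * b * c * e - 4 * b ^ 3 * e + b ^ 2 * c ^ 2 - 4 * c ^ 3
              - 27 * e ^ 2)) := by
        linear_combination (27 * h x₂) * h1
          + (2 * b ^ 3 - 9 * b * c + 27 * e + 2 * δ ^ 3) * h2 - 4 * hd3
      have hy1 : 0 ≤ h x₁ := by
        by_contra hy
        push_neg at hy
        have hy2 : h x₂ < 0 := by linarith [h1, h2, pow_pos hδpos 3]
        linarith [mul_pos_of_neg_of_neg hy hy2, hprod, Hd]
      have hy2 : h x₂ ≤ 0 := by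
        by_contra hy
        push_neg at hy
        have hy1' : 0 < h x₁ := by linarith [h1, h2, pow_pos hδpos 3]
        linarith [mul_pos hy1' hy, hprod, Hd]
      obtain ⟨r₁, hr₁mem, hr₁0⟩ :=
        intermediate_value_Icc hx₁mem.1 hcont.continuousOn ⟨Hm, hy1⟩
      obtain ⟨r₃, hr₃mem, hr₃0⟩ :=
        intermediate_value_Icc hx₂mem.2 hcont.continuousOn ⟨hy2, Hp⟩
      have hr13 : r₁ < r₃ := lt_of_le_of_lt hr₁mem.2 (lt_of_lt_of_le hx12 hr₃mem.1)
      set r₂ := -b - r₁ - r₃ with hr₂def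
      have e1 := hr₁0; rw [hh] at e1
      have e3 := hr₃0; rw [hh] at e3
      have hαr : (c - (r₁ * r₂ + r₁ * r₃ + r₂ * r₃)) * (r₁ - r₃) = 0 := by
        linear_combination e1 - e3 - (r₁ - r₃) * (r₁ + r₃) * hr₂def
      have hα : c - (r₁ * r₂ + r₁ * r₃ + r₂ * r₃) = 0 := by
        rcases mul_eq_zero.mp hαr with h' | h'
        · exact h'
        · exact absurd h' (sub_ne_zero.mpr hr13.ne)
      have hβ : e + r₁ * r₂ * r₃ = 0 := by
        linear_combination e1 - r₁ * hα - r₁ ^ 2 * hr₂def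
      have hfac : ∀ X : ℝ, h X = (X - r₁) * (X - r₂) * (X - r₃) := by
        intro X
        rw [hh]
        linear_combination X ^ 2 * hr₂def + X * hα + hβ
      have hr₂root : h r₂ = 0 := by rw [hfac r₂]; ring
      have e2 := hr₂root; rw [hh] at e2
      have hr₂le : r₂ ≤ s := by
        by_contra hcon
        push_neg at hcon
        have h1s : 0 < s - r₁ := by linarith [hr₁mem.2, hx₁mem.2, hx₂mem.2]
        have h2s : s - r₂ < 0 := by linarith
        have hP : (s - r₁) * (s - r₂) < 0 := mul_neg_of_pos_of_neg h1s h2s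
        have hfs := Hp
        rw [hfac s] at hfs
        have h3s : r₃ = s := by
          have hges : s ≤ r₃ := by
            by_contra h'
            push_neg at h'
            have hlt := mul_neg_of_neg_of_pos hP (by linarith : (0:ℝ) < s - r₃)
            linarith [hfs, hlt]
          linarith [hr₃mem.2]
        have hE0 : r₂ ^ 2 + r₂ * r₃ + r₃ ^ 2 + b * (r₂ + r₃) + c = 0 := by
          have hEr : (r₂ - r₃) * (r₂ ^ 2 + r₂ * r₃ + r₃ ^ 2 + b * (r₂ + r₃) + c) = 0 := by
            linear_combination e2 - e3
          rcases mul_eq_zero.mp hEr with h' | h'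
          · exfalso
            have : r₂ = r₃ := by linarith [sub_eq_zero.mp h']
            rw [h3s] at this
            linarith
          · exact h'
        have hE2 : r₂ ^ 2 + r₂ * r₃ + r₃ ^ 2 + b * (r₂ + r₃) + c
            = (r₂ - x₂) ^ 2 + (r₂ - x₂) * (r₃ - x₂) + (r₃ - x₂) ^ 2
              + δ * ((r₂ - x₂) + (r₃ - x₂)) := by
          linear_combination hcrit2 + (3 * (r₂ + r₃ - 2 * x₂)) * hx₂def
        have hu : 0 < r₂ - x₂ := by linarith [hx₂mem.2]
        have hw : 0 ≤ r₃ - x₂ := by linarith [hr₃mem.1]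
        linarith [hE0, hE2, pow_pos hu 2, mul_nonneg hu.le hw, sq_nonneg (r₃ - x₂),
          mul_nonneg hδpos.le (by linarith : (0:ℝ) ≤ (r₂ - x₂) + (r₃ - x₂))]
      have hr₂ge : -s ≤ r₂ := by
        by_contra hcon
        push_neg at hcon
        have h3m : -s - r₃ < 0 := by linarith [hr₃mem.1, hx₁mem.1, hx12]
        have h2m : 0 < -s - r₂ := by linarith
        have hP : (-s - r₂) * (-s - r₃) < 0 := mul_neg_of_pos_of_neg h2m h3m
        have hfm := Hm
        rw [hfac (-s)] at hfm
        have h1m : r₁ = -s := by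
          have : r₁ ≤ -s := by
            by_contra h'
            push_neg at h'
            have hgt := mul_pos_of_neg_of_neg (by linarith : -s - r₁ < 0) hP
            have hfm' : 0 < (-s - r₁) * (-s - r₂) * (-s - r₃) := by
              rw [mul_assoc]; exact hgt
            linarith [hfm, hfm']
          linarith [hr₁mem.1]
        have hE0 : r₂ ^ 2 + r₂ * r₁ + r₁ ^ 2 + b * (r₂ + r₁) + c = 0 := by
          have hEr : (r₂ - r₁) * (r₂ ^ 2 + r₂ * r₁ + r₁ ^ 2 + b * (r₂ + r₁) + c) = 0 := by
            linear_combination e2 - e1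
          rcases mul_eq_zero.mp hEr with h' | h'
          · exfalso
            have : r₂ = r₁ := by linarith [sub_eq_zero.mp h']
            rw [h1m] at this
            linarith
          · exact h'
        have hE1 : r₂ ^ 2 + r₂ * r₁ + r₁ ^ 2 + b * (r₂ + r₁) + c
            = (x₁ - r₂) ^ 2 + (x₁ - r₂) * (x₁ - r₁) + (x₁ - r₁) ^ 2
              + δ * ((x₁ - r₂) + (x₁ - r₁)) := by
          linear_combination hcrit1 + (3 * (r₁ + r₂ - 2 * x₁)) * hx₁def
        have hu : 0 < x₁ - r₂ := by linarith [hx₁mem.1]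
        have hw : 0 ≤ x₁ - r₁ := by linarith [hr₁mem.2]
        linarith [hE0, hE1, pow_pos hu 2, mul_nonneg hu.le hw, sq_nonneg (x₁ - r₁),
          mul_nonneg hδpos.le (by linarith : (0:ℝ) ≤ (x₁ - r₂) + (x₁ - r₁))]
      exact ⟨r₁, r₂, r₃, hfac,
        ⟨hr₁mem.1, le_trans hr₁mem.2 hx₁mem.2⟩,
        ⟨hr₂ge, hr₂le⟩,
        ⟨le_trans hx₂mem.1 hr₃mem.1, hr₃mem.2⟩⟩
end
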